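/- For every ω > 0 there exists ε > 0 such that for all finite simple graphs G, H on the same vertex set with maximum degree at most d, if the edit distance ed(G,H) < ε, then the statistical distance d_s(G,H) < ω. -/

import Mathlib

open MeasureTheory Filter Topology

/-- A rooted `(r,d)`-ball: a finite connected rooted graph with maximum degree at most `d`
in which every vertex is within distance `rad` of the root. -/
structure Ball (d : ℕ) where
  rad : ℕ
  n : ℕ
  graph : SimpleGraph (Fin n)
  root : Fin n
  conn : graph.Connected
  deg : ∀ v, (graph.neighborSet v).ncard ≤ d
  small : ∀ v, graph.dist root v ≤ rad

/-- Rooted isomorphism of rooted graphs. -/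
def RootedIso {V W : Type*} (G : SimpleGraph V) (x : V) (H : SimpleGraph W) (y : W) : Prop :=
  ∃ e : G ≃g H, e x = y

/-- The vertex set of the ball of radius `r` around `x`. -/
def ballVerts {V : Type*} (G : SimpleGraph V) (r : ℕ) (x : V) : Set V :=
  {y | G.Reachable x y ∧ G.dist x y ≤ r}

lemma rootMemBall {V : Type*} (G : SimpleGraph V) (r : ℕ) (x : V) : x ∈ ballVerts G r x :=
  ⟨SimpleGraph.Reachable.refl x, by simp [SimpleGraph.dist_self]⟩

/-- The rooted `r`-ball of `G` around `x` is rooted-isomorphic to the rooted graph `(H,y)`. -/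
def ballIso {V W : Type*} (G : SimpleGraph V) (r : ℕ) (x : V)
    (H : SimpleGraph W) (y : W) : Prop :=
  RootedIso (G.induce (ballVerts G r x)) ⟨x, rootMemBall G r x⟩ H y

/-- `pfreq G α` is the fraction of vertices of `G` whose rooted `α.rad`-ball is
isomorphic to the rooted ball `α`. -/
noncomputable def pfreq {V : Type*} {d : ℕ} (G : SimpleGraph V) (α : Ball d) : ℝ :=
  ({x : V | ballIso G α.rad x α.graph α.root}).ncard / (Nat.card V)

/-- The statistical distance of two finite graphs with respect to an enumeration `E`
of all rooted `(r,d)`-balls. -/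
noncomputable def ds {d : ℕ} (E : ℕ → Ball d) {V W : Type*}
    (G : SimpleGraph V) (H : SimpleGraph W) : ℝ :=
  ∑' i : ℕ, (1 / 2 : ℝ) ^ (i + 1) * |pfreq G (E i) - pfreq H (E i)|

/-- `E` enumerates all rooted `(r,d)`-balls up to rooted isomorphism. -/
def Covers {d : ℕ} (E : ℕ → Ball d) : Prop :=
  ∀ β : Ball d, ∃ i, (E i).rad = β.rad ∧ RootedIso (E i).graph (E i).root β.graph β.root

/-- Maximum degree of `G` is at most `d`. -/
def DegLe {V : Type*} (G : SimpleGraph V) (d : ℕ) : Prop :=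
  ∀ v, (G.neighborSet v).ncard ≤ d

/-!
Replacing `G` by `H` changes the neighbourhood of at most `2 |E(G) Δ E(H)|` vertices, and the
`r`-ball around `x` is the same in both graphs unless `x` lies within distance `r` (in `G`) of
such a vertex. Balls of radius `r` in a graph of maximum degree `d` have at most `(d + 1) ^ r`
vertices, so every frequency `pfreq · α` moves by at most `2 (d + 1) ^ α.rad · ed(G, H)`.
Choosing `N` with `2⁻ᴺ < ω / 2`, the tail of the series for `ds` beyond `N` is below `ω / 2`,
and the first `N` terms involve finitely many radii, so a small enough `ε` makes them sum to
less than `ω / 2` as well.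
-/

namespace Set

lemma ncard_biUnion_le_ncard_mul {ι α : Type*} {t : Set ι} (ht : t.Finite) (s : ι → Set α)
    {n : ℕ} (hs : ∀ i ∈ t, (s i).ncard ≤ n) : (⋃ i ∈ t, s i).ncard ≤ t.ncard * n := by
  calc (⋃ i ∈ t, s i).ncard ≤ ∑ i ∈ ht.toFinset, (s i).ncard := by
        simpa using ht.toFinset.set_ncard_biUnion_le s
    _ ≤ ∑ _i ∈ ht.toFinset, n := Finset.sum_le_sum fun i hi => hs i (by simpa using hi)
    _ = t.ncard * n := by simp [ncard_eq_toFinset_card t ht]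

lemma abs_ncard_sub_ncard_le {α : Type*} [Finite α] {A B S : Set α}
    (h : ∀ x ∉ S, x ∈ A ↔ x ∈ B) : |(A.ncard : ℝ) - B.ncard| ≤ S.ncard := by
  have one_side : ∀ {P Q : Set α}, (∀ x ∉ S, x ∈ P → x ∈ Q) →
      (P.ncard : ℝ) ≤ Q.ncard + S.ncard := by
    intro P Q hPQ
    have hsub : P ⊆ Q ∪ S := fun x hx => by
      by_cases hxS : x ∈ S
      · exact Or.inr hxS
      · exact Or.inl (hPQ x hxS hx)
    exact_mod_cast (ncard_le_ncard hsub).trans (ncard_union_le Q S)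
  rw [abs_sub_le_iff]
  constructor
  · linarith [one_side fun x hx => (h x hx).mp]
  · linarith [one_side fun x hx => (h x hx).mpr]

end Set

lemma Sym2.ncard_setOf_mem_le_two {α : Type*} (e : Sym2 α) : {v | v ∈ e}.ncard ≤ 2 := by
  induction e with
  | h a b =>
    have : {v | v ∈ s(a, b)} = {a, b} := by ext v; simp
    rw [this]
    exact (Set.ncard_insert_le a {b}).trans (by simp)

lemma RootedIso.iff_of_iso {V V' W : Type*} {G : SimpleGraph V} {G' : SimpleGraph V'}
    (e : G ≃g G') (x : V) (K : SimpleGraph W) (y : W) :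
    RootedIso G x K y ↔ RootedIso G' (e x) K y :=
  ⟨fun ⟨f, hf⟩ => ⟨e.symm.trans f, by simpa using hf⟩,
    fun ⟨f, hf⟩ => ⟨e.trans f, by simpa using hf⟩⟩

section ballVerts

variable {V : Type*} {G H : SimpleGraph V} {r : ℕ} {x y : V}

lemma mem_ballVerts_iff_edist_le : y ∈ ballVerts G r x ↔ G.edist x y ≤ r := by
  constructor
  · rintro ⟨hxy, hdist⟩
    rw [← hxy.coe_dist_eq_edist]
    exact_mod_cast hdist
  · intro h
    have hxy : G.Reachable x y :=
      SimpleGraph.reachable_of_edist_ne_top (ne_top_of_le_ne_top (ENat.natCast_ne_top r) h)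
    rw [← hxy.coe_dist_eq_edist] at h
    exact ⟨hxy, by exact_mod_cast h⟩

lemma mem_ballVerts_comm : y ∈ ballVerts G r x ↔ x ∈ ballVerts G r y := by
  rw [mem_ballVerts_iff_edist_le, mem_ballVerts_iff_edist_le, SimpleGraph.edist_comm]

lemma ballVerts_zero (G : SimpleGraph V) (x : V) : ballVerts G 0 x = {x} := by
  ext y
  rw [mem_ballVerts_iff_edist_le, Set.mem_singleton_iff, Nat.cast_zero, nonpos_iff_eq_zero,
    SimpleGraph.edist_eq_zero_iff, eq_comm]

lemma ballVerts_succ (G : SimpleGraph V) (r : ℕ) (x : V) :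
    ballVerts G (r + 1) x = ballVerts G r x ∪ ⋃ z ∈ ballVerts G r x, G.neighborSet z := by
  ext y
  simp only [Set.mem_union, Set.mem_iUnion, mem_ballVerts_iff_edist_le, SimpleGraph.mem_neighborSet,
    exists_prop]
  constructor
  · intro h
    rcases h.lt_or_eq with h | h
    · left
      exact Order.le_of_lt_add_one (by exact_mod_cast h)
    · right
      rw [SimpleGraph.edist_comm] at h
      obtain ⟨p, hp⟩ := SimpleGraph.exists_walk_of_edist_eq_coe h
      cases p with
      | nil => simp at hp
      | cons hadj q =>
        refine ⟨_, ?_, hadj.symm⟩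
        rw [SimpleGraph.edist_comm]
        calc G.edist _ x ≤ q.length := SimpleGraph.edist_le q
          _ = r := by simp_all
  · rintro (h | ⟨z, hz, hzy⟩)
    · exact h.trans (by norm_cast; omega)
    · calc G.edist x y ≤ G.edist x z + G.edist z y := SimpleGraph.edist_triangle
        _ ≤ r + 1 := add_le_add hz (SimpleGraph.edist_eq_one_iff_adj.mpr hzy).le

lemma ballVerts_subset_succ (G : SimpleGraph V) (r : ℕ) (x : V) :
    ballVerts G r x ⊆ ballVerts G (r + 1) x := by
  rw [ballVerts_succ]
  exact Set.subset_union_left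

lemma ncard_ballVerts_le [Finite V] {d : ℕ} (hG : DegLe G d) (r : ℕ) (x : V) :
    (ballVerts G r x).ncard ≤ (d + 1) ^ r := by
  induction r with
  | zero => simp [ballVerts_zero]
  | succ r ih =>
    rw [ballVerts_succ]
    calc _ ≤ (ballVerts G r x).ncard + (ballVerts G r x).ncard * d :=
          (Set.ncard_union_le _ _).trans (add_le_add_right
            (Set.ncard_biUnion_le_ncard_mul (Set.toFinite _) _ fun z _ => hG z) _)
      _ = (ballVerts G r x).ncard * (d + 1) := by ring
      _ ≤ (d + 1) ^ (r + 1) := by rw [pow_succ]; gcongr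

lemma ballVerts_eq_of_neighborSet_eq
    (h : ∀ z ∈ ballVerts G r x, G.neighborSet z = H.neighborSet z) :
    ballVerts G r x = ballVerts H r x := by
  induction r with
  | zero => rw [ballVerts_zero, ballVerts_zero]
  | succ r ih =>
    have h' : ∀ z ∈ ballVerts G r x, G.neighborSet z = H.neighborSet z :=
      fun z hz => h z (ballVerts_subset_succ G r x hz)
    rw [ballVerts_succ, ballVerts_succ, ← ih h']
    exact congrArg _ (Set.iUnion₂_congr h')

lemma ballIso_iff_of_neighborSet_eq
    (h : ∀ z ∈ ballVerts G r x, G.neighborSet z = H.neighborSet z)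
    {W : Type*} (K : SimpleGraph W) (y : W) :
    ballIso G r x K y ↔ ballIso H r x K y := by
  let e : G.induce (ballVerts G r x) ≃g H.induce (ballVerts H r x) :=
    { toEquiv := Equiv.setCongr (ballVerts_eq_of_neighborSet_eq h)
      map_rel_iff' := fun {a b} => by
        simp only [Equiv.setCongr_apply, SimpleGraph.comap_adj, Function.Embedding.coe_subtype]
        rw [← SimpleGraph.mem_neighborSet, ← SimpleGraph.mem_neighborSet, h a a.2] }
  exact RootedIso.iff_of_iso e _ K y

end ballVerts

section LocalChange

variable {V : Type*} [Finite V] (G H : SimpleGraph V)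

lemma ncard_neighborSet_ne_le :
    {y | G.neighborSet y ≠ H.neighborSet y}.ncard ≤
      2 * (symmDiff G.edgeSet H.edgeSet).ncard := by
  have hsub : {y | G.neighborSet y ≠ H.neighborSet y} ⊆
      ⋃ e ∈ symmDiff G.edgeSet H.edgeSet, {v | v ∈ e} := by
    intro y hy
    obtain ⟨z, hz⟩ : ∃ z, ¬(G.Adj y z ↔ H.Adj y z) := by
      by_contra! hc
      exact hy (Set.ext hc)
    have hyz : s(y, z) ∈ symmDiff G.edgeSet H.edgeSet := by
      rw [Set.mem_symmDiff, SimpleGraph.mem_edgeSet, SimpleGraph.mem_edgeSet]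
      tauto
    exact Set.mem_biUnion hyz (Sym2.mem_mk_left y z)
  calc _ ≤ _ := Set.ncard_le_ncard hsub (Set.toFinite _)
    _ ≤ (symmDiff G.edgeSet H.edgeSet).ncard * 2 :=
      Set.ncard_biUnion_le_ncard_mul (Set.toFinite _) _ fun e _ => Sym2.ncard_setOf_mem_le_two e
    _ = _ := mul_comm _ _

variable {G H}

lemma abs_pfreq_sub_le {d : ℕ} (hG : DegLe G d) (α : Ball d) :
    |pfreq G α - pfreq H α| ≤
      2 * (d + 1) ^ α.rad * ((symmDiff G.edgeSet H.edgeSet).ncard : ℝ) / Nat.card V := by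
  set D := {y | G.neighborSet y ≠ H.neighborSet y}
  set Bad := ⋃ y ∈ D, ballVerts G α.rad y
  have hgood : ∀ x ∉ Bad, x ∈ {x | ballIso G α.rad x α.graph α.root} ↔
      x ∈ {x | ballIso H α.rad x α.graph α.root} := by
    intro x hx
    refine ballIso_iff_of_neighborSet_eq (fun z hz => ?_) α.graph α.root
    by_contra hzD
    exact hx (Set.mem_biUnion hzD (mem_ballVerts_comm.mp hz))
  have hBad : Bad.ncard ≤ 2 * (d + 1) ^ α.rad * (symmDiff G.edgeSet H.edgeSet).ncard :=
    calc Bad.ncard ≤ D.ncard * (d + 1) ^ α.rad :=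
          Set.ncard_biUnion_le_ncard_mul (Set.toFinite _) _ fun y _ =>
            ncard_ballVerts_le hG α.rad y
      _ ≤ 2 * (symmDiff G.edgeSet H.edgeSet).ncard * (d + 1) ^ α.rad := by
          gcongr; exact ncard_neighborSet_ne_le G H
      _ = _ := by ring
  rw [pfreq, pfreq, ← sub_div, abs_div, Nat.abs_cast]
  gcongr
  exact (Set.abs_ncard_sub_ncard_le hgood).trans (by exact_mod_cast hBad)

lemma abs_pfreq_sub_le_one {d : ℕ} (α : Ball d) : |pfreq G α - pfreq H α| ≤ 1 := by
  have hp : ∀ K : SimpleGraph V, 0 ≤ pfreq K α ∧ pfreq K α ≤ 1 := fun K =>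
    ⟨by unfold pfreq; positivity,
      div_le_one_of_le₀ (by exact_mod_cast Set.ncard_le_card _) (Nat.cast_nonneg _)⟩
  rw [abs_sub_le_iff]
  constructor <;> linarith [hp G, hp H]

end LocalChange

lemma tsum_half_pow_mul_le {a : ℕ → ℝ} (h0 : ∀ i, 0 ≤ a i) (h1 : ∀ i, a i ≤ 1) (N : ℕ) :
    ∑' i, (1 / 2 : ℝ) ^ (i + 1) * a i ≤ ∑ i ∈ Finset.range N, a i + (1 / 2) ^ N := by
  have hgeo : Summable fun i : ℕ => (1 / 2 : ℝ) ^ (i + 1) :=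
    (summable_nat_add_iff 1).mpr (summable_geometric_of_lt_one (by norm_num) (by norm_num))
  have hle : ∀ i, (1 / 2 : ℝ) ^ (i + 1) * a i ≤ (1 / 2) ^ (i + 1) :=
    fun i => mul_le_of_le_one_right (by positivity) (h1 i)
  have hsum : Summable fun i => (1 / 2 : ℝ) ^ (i + 1) * a i :=
    hgeo.of_nonneg_of_le (fun i => mul_nonneg (by positivity) (h0 i)) hle
  rw [← hsum.sum_add_tsum_nat_add N]
  gcongr with i
  · exact mul_le_of_le_one_left (h0 i) (pow_le_one₀ (by norm_num) (by norm_num))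
  · calc ∑' i, (1 / 2 : ℝ) ^ (i + N + 1) * a (i + N)
        ≤ ∑' i, (1 / 2 : ℝ) ^ (i + N + 1) :=
          ((summable_nat_add_iff N).mpr hsum).tsum_le_tsum (fun i => hle (i + N))
            ((summable_nat_add_iff N).mpr hgeo)
      _ = (1 / 2) ^ (N + 1) * ∑' i, (1 / 2 : ℝ) ^ i := by
          rw [← tsum_mul_left]; exact tsum_congr fun i => by ring
      _ = (1 / 2) ^ N := by rw [tsum_geometric_two, pow_succ]; ring

theorem stability_lemma_general {d : ℕ} (E : ℕ → Ball d)
    (ω : ℝ) (hω : 0 < ω) :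
    ∃ ε > (0 : ℝ), ∀ (V : Type), Finite V → Nonempty V →
      ∀ (G H : SimpleGraph V), DegLe G d → DegLe H d →
      ((symmDiff G.edgeSet H.edgeSet).ncard : ℝ) / Nat.card V < ε →
      ds E G H < ω := by
  obtain ⟨N, hN⟩ : ∃ N : ℕ, (1 / 2 : ℝ) ^ N < ω / 2 :=
    exists_pow_lt_of_lt_one (by linarith) (by norm_num)
  set C : ℝ := ∑ i ∈ Finset.range N, 2 * (d + 1 : ℝ) ^ (E i).rad
  have hC : 0 ≤ C := by positivity
  refine ⟨ω / 2 / (C + 1), by positivity, fun V _ _ G H hG _ hedit => ?_⟩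
  set t := ((symmDiff G.edgeSet H.edgeSet).ncard : ℝ) / Nat.card V
  have head : ∑ i ∈ Finset.range N, |pfreq G (E i) - pfreq H (E i)| ≤ C * t := by
    rw [Finset.sum_mul]
    exact Finset.sum_le_sum fun i _ => (abs_pfreq_sub_le hG (E i)).trans_eq (by ring)
  have hCt : C * t < ω / 2 :=
    calc C * t ≤ C * (ω / 2 / (C + 1)) := by gcongr
      _ < ω / 2 := by
        rw [mul_div_assoc', div_lt_iff₀ (by linarith)]
        nlinarith
  calc ds E G H ≤ ∑ i ∈ Finset.range N, |pfreq G (E i) - pfreq H (E i)| + (1 / 2) ^ N :=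
        tsum_half_pow_mul_le (fun i => abs_nonneg _) (fun i => abs_pfreq_sub_le_one (E i)) N
    _ < ω := by linarith

/-- **Stability Lemma.** For every `ω > 0` there is `ε > 0` such that
any two finite graphs on the same vertex set with maximum degree at most `d` whose
edit distance is less than `ε` have statistical distance less than `ω`. -/
theorem stability_lemma {d : ℕ} (hd : 1 ≤ d) (E : ℕ → Ball d) (hE : Covers E)
    (ω : ℝ) (hω : 0 < ω) :
    ∃ ε > (0 : ℝ), ∀ (V : Type), Finite V → Nonempty V →
      ∀ (G H : SimpleGraph V), DegLe G d → DegLe H d →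
      ((symmDiff G.edgeSet H.edgeSet).ncard : ℝ) / Nat.card V < ε →
      ds E G H < ω :=
  stability_lemma_general E ω hω
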